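/- Let n = 2, 0 < α < β, and R_* > 0. Define η_R(x) = 1/2 for |x| ≤ √R, η_R(x) = (log R - log|x|)/log R for √R < |x| < R, and η_R(x) = 0 for |x| ≥ R. Then for R large, ∬_{{(x,y) : √R < |x| < R, |x-y| ≤ R_*}} (η_R(x) - η_R(y))²·|x-y|^(β-2-n-α) dx dy ≤ C·R_*^(β-α)/((β-α)·log R), with C independent of R. -/

import Mathlib

/-!
On the annulus the cutoff is `(log R - log |x|) / log R` clamped to `[0, 1/2]`, hence
`1 / log R`-Lipschitz as a function of `log |x|`. For `|x - y| ≤ R_* ≤ |x| / 2` this gives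
`|η x - η y| ≤ 2 |x - y| / (|x| log R)`, so the inner integral is at most
`4 / (|x| log R)² · ∫_{|z| ≤ R_*} |z|^(β-α-2) dz = 8π R_*^(β-α) / ((β-α) (|x| log R)²)`.
Integrating `|x|⁻²` over `√R < |x| < R` gives `π log R`, whence the bound with `C = 8π²`.
-/
open MeasureTheory Set Metric Module

section Radial

variable {E F : Type*} [NormedAddCommGroup E] [NormedSpace ℝ E] [FiniteDimensional ℝ E]
  [Nontrivial E] [MeasurableSpace E] [BorelSpace E] [NormedAddCommGroup F] [NormedSpace ℝ F]
  (μ : Measure E) [μ.IsAddHaarMeasure]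

theorem setIntegral_comp_norm {s : Set ℝ} (hs : MeasurableSet s) (f : ℝ → F) :
    ∫ x in {x : E | ‖x‖ ∈ s}, f ‖x‖ ∂μ =
      finrank ℝ E • μ.real (ball 0 1) • ∫ r in s ∩ Ioi 0, r ^ (finrank ℝ E - 1) • f r := by
  rw [← integral_indicator (s := {x : E | ‖x‖ ∈ s}) (measurable_norm hs)]
  simp_rw [show ∀ x : E, {x : E | ‖x‖ ∈ s}.indicator (fun x => f ‖x‖) x = s.indicator f ‖x‖
    from fun x => indicator_comp_right (g := f) _]
  rw [integral_fun_norm_addHaar μ, ← Measure.restrict_restrict hs, ← integral_indicator hs]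
  simp_rw [indicator_smul]

theorem setIntegral_closedBall_rpow_norm {q : ℝ} (hq : 0 < q) {ρ : ℝ} (hρ : 0 ≤ ρ) :
    ∫ x in closedBall (0 : E) ρ, ‖x‖ ^ (q - finrank ℝ E) ∂μ =
      finrank ℝ E * μ.real (ball 0 1) * ρ ^ q / q := by
  have hd : 1 ≤ finrank ℝ E := finrank_pos
  have hpow : ∀ r ∈ Ioc 0 ρ, r ^ (finrank ℝ E - 1) • r ^ (q - finrank ℝ E) = r ^ (q - 1) := by
    intro r hr
    rw [smul_eq_mul, ← Real.rpow_natCast, ← Real.rpow_add hr.1]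
    push_cast [hd]
    ring_nf
  have hball : closedBall (0 : E) ρ = {x | ‖x‖ ∈ Iic ρ} := by ext; simp
  rw [hball, setIntegral_comp_norm μ measurableSet_Iic (fun r => r ^ (q - finrank ℝ E)),
    Iic_inter_Ioi, setIntegral_congr_fun measurableSet_Ioc hpow,
    ← intervalIntegral.integral_of_le hρ, integral_rpow (.inl (by linarith)), sub_add_cancel,
    Real.zero_rpow hq.ne', nsmul_eq_mul, smul_eq_mul]
  ring

theorem setIntegral_annulus_inv_pow_norm {a b : ℝ} (ha : 0 < a) (hab : a ≤ b) :
    ∫ x in {x : E | a < ‖x‖ ∧ ‖x‖ < b}, (‖x‖ ^ finrank ℝ E)⁻¹ ∂μ =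
      finrank ℝ E * μ.real (ball 0 1) * Real.log (b / a) := by
  have hd : 1 ≤ finrank ℝ E := finrank_pos
  have hpow : ∀ r ∈ Ioo a b, r ^ (finrank ℝ E - 1) • (r ^ finrank ℝ E)⁻¹ = r⁻¹ := by
    intro r hr
    have hr0 : r ≠ 0 := (ha.trans hr.1).ne'
    rw [smul_eq_mul, ← Nat.sub_add_cancel hd, pow_succ, Nat.add_sub_cancel]
    field_simp
  rw [show {x : E | a < ‖x‖ ∧ ‖x‖ < b} = {x | ‖x‖ ∈ Ioo a b} from rfl,
    setIntegral_comp_norm μ measurableSet_Ioo (fun r => (r ^ finrank ℝ E)⁻¹),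
    Ioo_inter_Ioi, max_eq_left ha.le, setIntegral_congr_fun measurableSet_Ioo hpow,
    ← integral_Ioc_eq_integral_Ioo, ← intervalIntegral.integral_of_le hab,
    integral_inv_of_pos ha (ha.trans_le hab), nsmul_eq_mul, smul_eq_mul]
  ring

end Radial

noncomputable def logCutoff (R t : ℝ) : ℝ :=
  if t ≤ √R then 1 / 2 else if t < R then (Real.log R - Real.log t) / Real.log R else 0

theorem logCutoff_eq {R t : ℝ} (hR : 1 < R) (ht : 0 < t) :
    logCutoff R t = (Real.log R - max (Real.log R / 2) (min (Real.log t) (Real.log R))) /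
      Real.log R := by
  have hL : 0 < Real.log R := Real.log_pos hR
  have hsqrt : Real.log √R = Real.log R / 2 := Real.log_sqrt (by linarith)
  unfold logCutoff
  split_ifs with h₁ h₂
  · have : Real.log t ≤ Real.log R / 2 := hsqrt ▸ Real.log_le_log ht h₁
    rw [min_eq_left (by linarith), max_eq_left this]
    field_simp
    ring
  · have h₁' : Real.log R / 2 < Real.log t :=
      hsqrt ▸ Real.log_lt_log (Real.sqrt_pos.2 (by linarith)) (not_le.1 h₁)
    rw [min_eq_left (Real.log_le_log ht h₂.le), max_eq_right h₁'.le]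
  · rw [min_eq_right (Real.log_le_log (by linarith) (not_lt.1 h₂)), max_eq_right (by linarith),
      sub_self, zero_div]

theorem abs_logCutoff_sub_le {R a b : ℝ} (hR : 1 < R) (ha : 0 < a) (hb : 0 < b) :
    |logCutoff R a - logCutoff R b| ≤ |Real.log a - Real.log b| / Real.log R := by
  rw [logCutoff_eq hR ha, logCutoff_eq hR hb, ← sub_div, abs_div, abs_of_pos (Real.log_pos hR),
    sub_sub_sub_cancel_left]
  refine div_le_div_of_nonneg_right ?_ (Real.log_pos hR).le
  calc _ ≤ |min (Real.log b) (Real.log R) - min (Real.log a) (Real.log R)| := by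
        simpa only [max_comm (Real.log R / 2)] using abs_max_sub_max_le_abs _ _ _
    _ ≤ |Real.log b - Real.log a| := (abs_min_sub_min_le_max _ _ _ _).trans (by simp)
    _ = |Real.log a - Real.log b| := abs_sub_comm _ _

theorem log_sub_log_le_sub_div {a b : ℝ} (ha : 0 < a) (hb : 0 < b) :
    Real.log a - Real.log b ≤ (a - b) / b := by
  have := Real.log_le_sub_one_of_pos (div_pos ha hb)
  rwa [Real.log_div ha.ne' hb.ne', div_sub_one hb.ne'] at this

theorem abs_log_sub_log_le {a b : ℝ} (ha : 0 < a) (hb : 0 < b) (hab : a ≤ 2 * b) :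
    |Real.log a - Real.log b| ≤ 2 * |a - b| / a := by
  rcases le_total b a with h | h
  · rw [abs_of_nonneg (sub_nonneg.2 (Real.log_le_log hb h)), abs_of_nonneg (sub_nonneg.2 h)]
    calc _ ≤ (a - b) / b := log_sub_log_le_sub_div ha hb
      _ ≤ 2 * (a - b) / a := by rw [div_le_div_iff₀ hb ha]; nlinarith
  · rw [abs_of_nonpos (sub_nonpos.2 (Real.log_le_log ha h)), abs_of_nonpos (sub_nonpos.2 h),
      neg_sub, neg_sub]
    calc _ ≤ (b - a) / a := log_sub_log_le_sub_div hb ha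
      _ ≤ 2 * (b - a) / a := by gcongr; linarith

section Kernel

variable {E : Type*} [NormedAddCommGroup E]

theorem abs_logCutoff_norm_sub_le {R : ℝ} (hR : 1 < R) {x y : E} (hx : x ≠ 0)
    (hxy : 2 * ‖x - y‖ ≤ ‖x‖) :
    |logCutoff R ‖x‖ - logCutoff R ‖y‖| ≤ 2 * ‖x - y‖ / (‖x‖ * Real.log R) := by
  have hx' : 0 < ‖x‖ := norm_pos_iff.2 hx
  have hy : ‖x‖ ≤ 2 * ‖y‖ := by linarith [norm_sub_norm_le x y]
  have hL : 0 < Real.log R := Real.log_pos hR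
  calc _ ≤ |Real.log ‖x‖ - Real.log ‖y‖| / Real.log R :=
        abs_logCutoff_sub_le hR hx' (by linarith)
    _ ≤ 2 * |‖x‖ - ‖y‖| / ‖x‖ / Real.log R := by
        gcongr; exact abs_log_sub_log_le hx' (by linarith) hy
    _ ≤ 2 * ‖x - y‖ / ‖x‖ / Real.log R := by
        gcongr; exact abs_norm_sub_norm_le x y
    _ = _ := div_div _ _ _

theorem sq_logCutoff_norm_sub_mul_rpow_le {R : ℝ} (hR : 1 < R) {x y : E} (hx : x ≠ 0)
    (hxy : 2 * ‖x - y‖ ≤ ‖x‖) (p : ℝ) :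
    (logCutoff R ‖x‖ - logCutoff R ‖y‖) ^ 2 * ‖x - y‖ ^ p ≤
      4 / (‖x‖ * Real.log R) ^ 2 * ‖x - y‖ ^ (p + 2) := by
  rcases eq_or_ne y x with rfl | hyx
  · rw [sub_self, zero_pow two_ne_zero, zero_mul]
    positivity
  rw [Real.rpow_add (norm_pos_iff.2 (sub_ne_zero.2 hyx.symm)), Real.rpow_two, ← sq_abs]
  calc _ ≤ (2 * ‖x - y‖ / (‖x‖ * Real.log R)) ^ 2 * ‖x - y‖ ^ p := by
        gcongr; exact abs_logCutoff_norm_sub_le hR hx hxy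
    _ = _ := by ring

variable [NormedSpace ℝ E] [FiniteDimensional ℝ E] [Nontrivial E] [MeasurableSpace E]
  [BorelSpace E] (μ : Measure E) [μ.IsAddHaarMeasure]

theorem setIntegral_sq_logCutoff_sub_mul_rpow_le {R ρ q : ℝ} (hR : 1 < R) (hρ : 0 < ρ)
    (hq : 0 < q) {x : E} (hx : 2 * ρ ≤ ‖x‖) :
    ∫ y in {y | ‖x - y‖ ≤ ρ},
        (logCutoff R ‖x‖ - logCutoff R ‖y‖) ^ 2 * ‖x - y‖ ^ (q - finrank ℝ E - 2) ∂μ ≤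
      4 / (‖x‖ * Real.log R) ^ 2 * (finrank ℝ E * μ.real (ball 0 1) * ρ ^ q / q) := by
  set k : E → ℝ := (closedBall 0 ρ).indicator fun z => ‖z‖ ^ (q - finrank ℝ E)
  have hk : ∫ z, k z ∂μ = finrank ℝ E * μ.real (ball 0 1) * ρ ^ q / q := by
    rw [integral_indicator measurableSet_closedBall, setIntegral_closedBall_rpow_norm μ hq hρ.le]
  have hk_nonneg : ∀ z, 0 ≤ k z := indicator_nonneg fun z _ => by positivity
  have hV : 0 < μ.real (ball 0 1) :=
    ENNReal.toReal_pos (measure_ball_pos μ 0 one_pos).ne' measure_ball_lt_top.ne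
  have hd : 0 < (finrank ℝ E : ℝ) := Nat.cast_pos.2 finrank_pos
  -- a nonzero Bochner integral forces integrability
  have hk_int : Integrable k μ :=
    .of_integral_ne_zero (hk ▸ (div_pos (by positivity) hq).ne')
  have hx0 : x ≠ 0 := norm_pos_iff.1 (by linarith)
  have hkernel : ∀ y ∈ {y | ‖x - y‖ ≤ ρ},
      (logCutoff R ‖x‖ - logCutoff R ‖y‖) ^ 2 * ‖x - y‖ ^ (q - finrank ℝ E - 2) ≤
        4 / (‖x‖ * Real.log R) ^ 2 * k (x - y) := by
    intro y (hy : ‖x - y‖ ≤ ρ)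
    have : k (x - y) = ‖x - y‖ ^ (q - finrank ℝ E) :=
      indicator_of_mem (mem_closedBall_zero_iff.2 hy) _
    simpa only [this, sub_add_cancel] using
      sq_logCutoff_norm_sub_mul_rpow_le hR hx0 (by linarith) (q - finrank ℝ E - 2)
  calc _ ≤ ∫ y in {y | ‖x - y‖ ≤ ρ}, 4 / (‖x‖ * Real.log R) ^ 2 * k (x - y) ∂μ :=
        integral_mono_of_nonneg (.of_forall fun y => by positivity)
          ((hk_int.comp_sub_left x).const_mul _).integrableOn
          ((ae_restrict_iff' (measurableSet_le (by fun_prop) measurable_const)).2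
            (.of_forall hkernel))
    _ ≤ ∫ y, 4 / (‖x‖ * Real.log R) ^ 2 * k (x - y) ∂μ :=
        setIntegral_le_integral ((hk_int.comp_sub_left x).const_mul _)
          (.of_forall fun y => mul_nonneg (by positivity) (hk_nonneg _))
    _ = _ := by rw [integral_const_mul, integral_sub_left_eq_self k μ x, hk]

end Kernel

theorem measureReal_ball_zero_one_fin_two :
    volume.real (ball (0 : EuclideanSpace ℝ (Fin 2)) 1) = Real.pi := by
  simp [measureReal_def, Real.pi_pos.le]

theorem setIntegral_annulus_sqrt_inv_sq_norm {R : ℝ} (hR : 1 < R) :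
    ∫ x in {x : EuclideanSpace ℝ (Fin 2) | √R < ‖x‖ ∧ ‖x‖ < R}, (‖x‖ ^ 2)⁻¹ =
      Real.pi * Real.log R := by
  have h := setIntegral_annulus_inv_pow_norm (volume : Measure (EuclideanSpace ℝ (Fin 2)))
    (Real.sqrt_pos.2 (by linarith)) (Real.sqrt_le_self_iff.2 (.inr hR.le))
  rw [finrank_euclideanSpace_fin, measureReal_ball_zero_one_fin_two,
    Real.log_div (by linarith) (Real.sqrt_pos.2 (by linarith)).ne', Real.log_sqrt (by linarith)]
    at h
  rw [h]
  ring

theorem stmt_17_general (α β Rs : ℝ) (hαβ : α < β) (hRs : 0 < Rs) :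
    ∃ C > 0, ∃ R₀ : ℝ, ∀ R : ℝ, R₀ ≤ R →
      let η : EuclideanSpace ℝ (Fin 2) → ℝ := fun x =>
        if ‖x‖ ≤ Real.sqrt R then 1 / 2
        else if ‖x‖ < R then (Real.log R - Real.log ‖x‖) / Real.log R
        else 0
      (∫ x in {x : EuclideanSpace ℝ (Fin 2) | Real.sqrt R < ‖x‖ ∧ ‖x‖ < R},
        ∫ y in {y : EuclideanSpace ℝ (Fin 2) | ‖x - y‖ ≤ Rs},
          (η x - η y) ^ 2 * ‖x - y‖ ^ (β - 2 - 2 - α)) ≤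
        C * Rs ^ (β - α) / ((β - α) * Real.log R) := by
  have hq : 0 < β - α := sub_pos.2 hαβ
  refine ⟨8 * Real.pi ^ 2, by positivity, 4 * Rs ^ 2 + 2, fun R hR => ?_⟩
  have hR1 : 1 < R := by nlinarith
  have hL : 0 < Real.log R := Real.log_pos hR1
  have hsqrt : 2 * Rs ≤ √R := Real.le_sqrt_of_sq_le (by linarith)
  have hann := setIntegral_annulus_sqrt_inv_sq_norm hR1
  have hint : IntegrableOn (fun x : EuclideanSpace ℝ (Fin 2) => (‖x‖ ^ 2)⁻¹)
      {x | √R < ‖x‖ ∧ ‖x‖ < R} :=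
    .of_integral_ne_zero (hann ▸ (by positivity))
  have hexp : β - 2 - 2 - α = β - α - finrank ℝ (EuclideanSpace ℝ (Fin 2)) - 2 := by
    rw [finrank_euclideanSpace_fin]; push_cast; ring
  show ∫ x in {x | √R < ‖x‖ ∧ ‖x‖ < R}, ∫ y in {y | ‖x - y‖ ≤ Rs},
    (logCutoff R ‖x‖ - logCutoff R ‖y‖) ^ 2 * ‖x - y‖ ^ (β - 2 - 2 - α) ≤ _
  rw [hexp]
  calc _ ≤ ∫ x in {x : EuclideanSpace ℝ (Fin 2) | √R < ‖x‖ ∧ ‖x‖ < R},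
        4 / Real.log R ^ 2 * (2 * Real.pi * Rs ^ (β - α) / (β - α)) * (‖x‖ ^ 2)⁻¹ := by
        refine integral_mono_of_nonneg (.of_forall fun x => integral_nonneg fun y => by positivity)
          (hint.const_mul _) ((ae_restrict_iff' (measurable_norm measurableSet_Ioo)).2
            (.of_forall fun x hx => ?_))
        refine (setIntegral_sq_logCutoff_sub_mul_rpow_le volume hR1 hRs hq
          (by linarith [hx.1])).trans_eq ?_
        rw [finrank_euclideanSpace_fin, measureReal_ball_zero_one_fin_two]
        push_cast
        ring
    _ = _ := by
        rw [integral_const_mul, hann]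
        field_simp
        ring

theorem stmt_17 (α β Rs : ℝ) (hα : 0 < α) (hαβ : α < β) (hRs : 0 < Rs) :
    ∃ C > 0, ∃ R₀ : ℝ, ∀ R : ℝ, R₀ ≤ R →
      let η : EuclideanSpace ℝ (Fin 2) → ℝ := fun x =>
        if ‖x‖ ≤ Real.sqrt R then 1 / 2
        else if ‖x‖ < R then (Real.log R - Real.log ‖x‖) / Real.log R
        else 0
      (∫ x in {x : EuclideanSpace ℝ (Fin 2) | Real.sqrt R < ‖x‖ ∧ ‖x‖ < R},
        ∫ y in {y : EuclideanSpace ℝ (Fin 2) | ‖x - y‖ ≤ Rs},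
          (η x - η y) ^ 2 * ‖x - y‖ ^ (β - 2 - 2 - α)) ≤
        C * Rs ^ (β - α) / ((β - α) * Real.log R) :=
  stmt_17_general α β Rs hαβ hRs
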